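/- Let G be a locally compact group, X and Ξ G-spaces with G-invariant measures, Y a separable Hilbert space with a unitary representation μ : G → U(Y), and φ, ψ : X × Ξ → Y joint-G-equivariant feature maps. Define S_φ[γ](x) := ∫_Ξ γ(ξ) φ(x,ξ) dξ (Bochner integral), R_ψ[f](ξ) := ∫_X ⟨f(x), ψ(x,ξ)⟩_Y dx, and the unitary representation π_g[f](x) := μ_g(f(g⁻¹·x)) on L²(X;Y). Assume (1) the composite operator T := S_φ ∘ R_ψ : L²(X;Y) → L²(X;Y) is a well-defined bounded linear operator, and (2) π is irreducible. Then there exists a constant C ∈ ℂ such that for every f ∈ L²(X;Y), S_φ[R_ψ[f]] = C · f. -/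

import Mathlib

/-!
Joint equivariance of `φ` and `ψ`, invariance of the measures and unitarity of `ρ` make the
substitutions `x ↦ g • x` and `ξ ↦ g • ξ` turn `R_ψ[π_g f]` into `R_ψ[f](g⁻¹ • ·)` and
`S_φ[γ(g⁻¹ • ·)]` into `π_g S_φ[γ]`, so `T = S_φ ∘ R_ψ` commutes with `π`. By Schur's lemma
`T` is then scalar: its real and imaginary parts are self-adjoint and still commute with `π`
(as `π_g⋆ = π_{g⁻¹}`), and a self-adjoint `A` commuting with `π` has at most one spectral value.
Indeed, two values `a < b` would give, by functional calculus, nonzero operators `P, Q`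
commuting with `π` with `Q P = 0`; the closure of the range of `P` is then a closed invariant
subspace that is neither `0` nor everything.
-/

open MeasureTheory

section Schur

open ContinuousLinearMap ComplexStarModule

def IsTopologicallyIrreducible {𝕜 E : Type*} [NontriviallyNormedField 𝕜] [NormedAddCommGroup E]
    [NormedSpace 𝕜 E] (S : Set (E →L[𝕜] E)) : Prop :=
  ∀ V : Submodule 𝕜 E, IsClosed (V : Set E) → (∀ s ∈ S, ∀ v ∈ V, s v ∈ V) → V = ⊥ ∨ V = ⊤

namespace IsTopologicallyIrreducible

theorem eq_zero_of_mul_eq_zero {𝕜 E : Type*} [NontriviallyNormedField 𝕜] [NormedAddCommGroup E]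
    [NormedSpace 𝕜 E] {S : Set (E →L[𝕜] E)} (hS : IsTopologicallyIrreducible S)
    {P Q : E →L[𝕜] E} (hP : ∀ s ∈ S, Commute s P) (hP₀ : P ≠ 0) (hQP : Q * P = 0) : Q = 0 := by
  set V := (LinearMap.range (P : E →ₗ[𝕜] E)).topologicalClosure
  have hrange : ∀ v, P v ∈ V := fun v => Submodule.le_topologicalClosure _ ⟨v, rfl⟩
  have hinv : ∀ s ∈ S, ∀ v ∈ V, s v ∈ V := by
    intro s hs v hv
    refine Set.MapsTo.closure (f := s) ?_ s.continuous hv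
    rintro _ ⟨w, rfl⟩
    exact ⟨s w, congr($((hP s hs).eq) w).symm⟩
  have hker : V ≤ LinearMap.ker (Q : E →ₗ[𝕜] E) :=
    Submodule.topologicalClosure_minimal _
      (fun _ ⟨w, hw⟩ => hw ▸ congr($hQP w)) Q.isClosed_ker
  rcases hS V (Submodule.isClosed_topologicalClosure _) hinv with hV | hV
  · exact absurd (ContinuousLinearMap.ext fun v => by simpa [hV] using hrange v) hP₀
  · exact ContinuousLinearMap.ext fun v => hker (hV ▸ Submodule.mem_top)

variable {H : Type*} [NormedAddCommGroup H] [InnerProductSpace ℂ H] [CompleteSpace H]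
  {S : Set (H →L[ℂ] H)}

theorem spectrum_subsingleton (hS : IsTopologicallyIrreducible S) {A : H →L[ℂ] H}
    (hA : IsSelfAdjoint A) (hAS : ∀ s ∈ S, Commute s A) : (spectrum ℝ A).Subsingleton := by
  suffices ∀ a ∈ spectrum ℝ A, ∀ b ∈ spectrum ℝ A, ¬ a < b from fun a ha b hb =>
    by_contra fun hab => (lt_or_gt_of_ne hab).elim (this a ha b hb) (this b hb a ha)
  intro a ha b hb hab
  set c := (a + b) / 2
  set f : ℝ → ℝ := fun t => max (t - c) 0
  set g : ℝ → ℝ := fun t => max (c - t) 0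
  have hgf : (fun t => g t * f t) = 0 := by
    funext t
    rcases le_total t c with h | h
    · simp [f, h]
    · simp [g, h]
  have hne : ∀ k : ℝ → ℝ, Continuous k → ∀ x ∈ spectrum ℝ A, k x ≠ 0 → cfc k A ≠ 0 := by
    intro k hk x hx hkx h0
    rw [← cfc_zero ℝ A, cfc_eq_cfc_iff_eqOn] at h0
    exact hkx (h0 hx)
  refine hne g (by fun_prop) a ha (by simp [g, c]; linarith)
    (hS.eq_zero_of_mul_eq_zero (fun s hs => ((hAS s hs).symm.cfc_real f).symm)
      (hne f (by fun_prop) b hb (by simp [f, c]; linarith)) ?_)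
  rw [← cfc_mul g f A, hgf, cfc_zero]

theorem exists_eq_algebraMap_of_isSelfAdjoint (hS : IsTopologicallyIrreducible S)
    {A : H →L[ℂ] H} (hA : IsSelfAdjoint A) (hAS : ∀ s ∈ S, Commute s A) :
    ∃ c : ℝ, A = algebraMap ℝ _ c := by
  obtain ⟨c, hc⟩ : ∃ c, spectrum ℝ A ⊆ {c} := by
    rcases (hS.spectrum_subsingleton hA hAS).eq_empty_or_singleton with h | ⟨c, h⟩
    · exact ⟨0, h ▸ Set.empty_subset _⟩
    · exact ⟨c, h.subset⟩
  exact ⟨c, CFC.eq_algebraMap_of_spectrum_subset_singleton A c hc⟩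

theorem exists_eq_algebraMap (hS : IsTopologicallyIrreducible S)
    (hS_star : ∀ s ∈ S, star s ∈ S) {T : H →L[ℂ] H} (hTS : ∀ s ∈ S, Commute s T) :
    ∃ c : ℂ, T = algebraMap ℂ _ c := by
  have hT'S : ∀ s ∈ S, Commute s (star T) := fun s hs => by
    simpa using (hTS (star s) (hS_star s hs)).star_star
  obtain ⟨a, ha⟩ := hS.exists_eq_algebraMap_of_isSelfAdjoint (ℜ T).2 fun s hs => by
    rw [realPart_apply_coe]
    exact ((hTS s hs).add_right (hT'S s hs)).smul_right _
  obtain ⟨b, hb⟩ := hS.exists_eq_algebraMap_of_isSelfAdjoint (ℑ T).2 fun s hs => by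
    rw [imaginaryPart_apply_coe]
    exact (((hTS s hs).sub_right (hT'S s hs)).smul_right _).smul_right _
  refine ⟨a + Complex.I * b, ?_⟩
  rw [← realPart_add_I_smul_imaginaryPart T, ha, hb]
  simp [Algebra.algebraMap_eq_smul_one, add_smul, mul_smul, Complex.coe_smul]

end IsTopologicallyIrreducible

theorem exists_eq_smul_of_commute_of_irreducible {G H : Type*} [Group G] [NormedAddCommGroup H]
    [InnerProductSpace ℂ H] [CompleteSpace H] (π : G →* (H ≃ₗᵢ[ℂ] H))
    (hirr : ∀ V : Submodule ℂ H, IsClosed (V : Set H) →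
      (∀ (g : G) (v : H), v ∈ V → π g v ∈ V) → V = ⊥ ∨ V = ⊤)
    {T : H →L[ℂ] H} (hT : ∀ g, Commute (π g : H →L[ℂ] H) T) : ∃ C : ℂ, ∀ v, T v = C • v := by
  set S := Set.range fun g => (π g : H →L[ℂ] H)
  have hS : IsTopologicallyIrreducible S := fun V hV hVS =>
    hirr V hV fun g v hv => hVS _ ⟨g, rfl⟩ v hv
  have hS_star : ∀ s ∈ S, star s ∈ S := by
    rintro _ ⟨g, rfl⟩
    refine ⟨g⁻¹, ?_⟩
    simp only [map_inv, star_eq_adjoint, LinearIsometryEquiv.adjoint_eq_symm]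
    rfl
  obtain ⟨C, hC⟩ := hS.exists_eq_algebraMap hS_star (by rintro _ ⟨g, rfl⟩; exact hT g)
  exact ⟨C, fun v => by simp [hC, Algebra.algebraMap_eq_smul_one]⟩

end Schur

section Equivariance

variable {G X Ξ Y : Type*} [Group G] [MulAction G X] [MulAction G Ξ]
  [NormedAddCommGroup Y] [InnerProductSpace ℂ Y]

theorem integral_comp_smul_of_measurePreserving [MeasurableSpace X] {E : Type*}
    [NormedAddCommGroup E] [NormedSpace ℝ E] {μ : Measure X}
    (hμ : ∀ g : G, MeasurePreserving (g • · : X → X) μ μ) (g : G) (F : X → E) : ∫ x, F (g • x) ∂μ = ∫ x, F x ∂μ :=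
  letI : MeasurableConstSMul G X := ⟨fun g => (hμ g).measurable⟩
  (hμ g).integral_comp (measurableEmbedding_const_smul g) F

-- `ridgeletTransform` is the paper's `R_ψ` and `jointMachine` its `S_φ`.
noncomputable def ridgeletTransform [MeasurableSpace X] (μX : Measure X) (ψ : X → Ξ → Y)
    (f : X → Y) (ξ : Ξ) : ℂ :=
  ∫ x, inner ℂ (f x) (ψ x ξ) ∂μX

noncomputable def jointMachine [MeasurableSpace Ξ] (μΞ : Measure Ξ) (φ : X → Ξ → Y)
    (γ : Ξ → ℂ) (x : X) : Y :=
  ∫ ξ, γ ξ • φ x ξ ∂μΞ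

variable (ρ : G →* (Y ≃ₗᵢ[ℂ] Y))

theorem ridgeletTransform_of_ae_eq_smul [MeasurableSpace X] {μX : Measure X}
    (hμX : ∀ g : G, MeasurePreserving (g • · : X → X) μX μX) {ψ : X → Ξ → Y}
    (hψ : ∀ (g : G) (x : X) (ξ : Ξ), ψ (g • x) (g • ξ) = ρ g (ψ x ξ))
    {g : G} {f f' : X → Y} (hf' : f' =ᵐ[μX] fun x => ρ g (f (g⁻¹ • x))) (ξ : Ξ) :
    ridgeletTransform μX ψ f' ξ = ridgeletTransform μX ψ f (g⁻¹ • ξ) := by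
  have hψ' : ∀ x, ψ (g • x) ξ = ρ g (ψ x (g⁻¹ • ξ)) := fun x => by
    rw [← hψ, smul_inv_smul]
  calc ridgeletTransform μX ψ f' ξ
      = ∫ x, inner ℂ (ρ g (f (g⁻¹ • x))) (ψ x ξ) ∂μX :=
        integral_congr_ae (hf'.mono fun x hx => congrArg (inner ℂ · (ψ x ξ)) hx)
    _ = ∫ x, inner ℂ (ρ g (f (g⁻¹ • g • x))) (ψ (g • x) ξ) ∂μX :=
        (integral_comp_smul_of_measurePreserving hμX g _).symm
    _ = ridgeletTransform μX ψ f (g⁻¹ • ξ) := by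
        simp only [inv_smul_smul, hψ', LinearIsometryEquiv.inner_map_map, ridgeletTransform]

theorem map_jointMachine_inv_smul [MeasurableSpace Ξ] {μΞ : Measure Ξ}
    (hμΞ : ∀ g : G, MeasurePreserving (g • · : Ξ → Ξ) μΞ μΞ) {φ : X → Ξ → Y}
    (hφ : ∀ (g : G) (x : X) (ξ : Ξ), φ (g • x) (g • ξ) = ρ g (φ x ξ))
    (g : G) (γ : Ξ → ℂ) (x : X) :
    ρ g (jointMachine μΞ φ γ (g⁻¹ • x)) = jointMachine μΞ φ (fun ξ => γ (g⁻¹ • ξ)) x := by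
  have hφ' : ∀ ξ, ρ g (φ (g⁻¹ • x) ξ) = φ x (g • ξ) := fun ξ => by
    rw [← hφ, smul_inv_smul]
  calc ρ g (jointMachine μΞ φ γ (g⁻¹ • x))
      = ∫ ξ, ρ g (γ ξ • φ (g⁻¹ • x) ξ) ∂μΞ :=
        ((ρ g).toContinuousLinearEquiv.integral_comp_comm _).symm
    _ = ∫ ξ, γ (g⁻¹ • g • ξ) • φ x (g • ξ) ∂μΞ := by
        simp only [map_smul, hφ', inv_smul_smul]
    _ = jointMachine μΞ φ (fun ξ => γ (g⁻¹ • ξ)) x :=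
        integral_comp_smul_of_measurePreserving hμΞ g (fun ξ => γ (g⁻¹ • ξ) • φ x ξ)

theorem commute_of_ae_eq_jointMachine_ridgeletTransform [MeasurableSpace X] [MeasurableSpace Ξ]
    {μX : Measure X} {μΞ : Measure Ξ}
    (hμX : ∀ g : G, MeasurePreserving (g • · : X → X) μX μX)
    (hμΞ : ∀ g : G, MeasurePreserving (g • · : Ξ → Ξ) μΞ μΞ) {φ ψ : X → Ξ → Y}
    (hφ : ∀ (g : G) (x : X) (ξ : Ξ), φ (g • x) (g • ξ) = ρ g (φ x ξ))
    (hψ : ∀ (g : G) (x : X) (ξ : Ξ), ψ (g • x) (g • ξ) = ρ g (ψ x ξ))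
    {T : Lp Y 2 μX →L[ℂ] Lp Y 2 μX}
    (hT : ∀ f : Lp Y 2 μX, T f =ᵐ[μX] jointMachine μΞ φ (ridgeletTransform μX ψ f))
    {π : G →* (Lp Y 2 μX ≃ₗᵢ[ℂ] Lp Y 2 μX)}
    (hπ : ∀ (g : G) (f : Lp Y 2 μX), π g f =ᵐ[μX] fun x => ρ g (f (g⁻¹ • x))) (g : G) :
    Commute (π g : Lp Y 2 μX →L[ℂ] Lp Y 2 μX) T := by
  refine ContinuousLinearMap.ext fun f => Lp.ext ?_
  have hTf : (fun x => T f (g⁻¹ • x)) =ᵐ[μX]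
      fun x => jointMachine μΞ φ (ridgeletTransform μX ψ f) (g⁻¹ • x) :=
    (hμX g⁻¹).quasiMeasurePreserving.ae_eq (hT f)
  calc π g (T f)
      =ᵐ[μX] fun x => ρ g (T f (g⁻¹ • x)) := hπ g (T f)
    _ =ᵐ[μX] fun x => ρ g (jointMachine μΞ φ (ridgeletTransform μX ψ f) (g⁻¹ • x)) :=
        hTf.fun_comp (ρ g)
    _ = jointMachine μΞ φ (ridgeletTransform μX ψ (π g f)) := by
        funext x
        rw [map_jointMachine_inv_smul ρ hμΞ hφ,
          funext (ridgeletTransform_of_ae_eq_smul ρ hμX hψ (hπ g f))]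
    _ =ᵐ[μX] T (π g f) := (hT (π g f)).symm

end Equivariance

theorem statement6_general
    {G X Ξ Y : Type*} [Group G]
    [MeasurableSpace X] [MulAction G X]
    [MeasurableSpace Ξ] [MulAction G Ξ]
    (μX : Measure X) (μΞ : Measure Ξ)
    (hμX : ∀ g : G, MeasurePreserving (fun x : X => g • x) μX μX)
    (hμΞ : ∀ g : G, MeasurePreserving (fun ξ : Ξ => g • ξ) μΞ μΞ)
    [NormedAddCommGroup Y] [InnerProductSpace ℂ Y] [CompleteSpace Y]
    (ρ : G →* (Y ≃ₗᵢ[ℂ] Y))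
    (φ ψ : X → Ξ → Y)
    (hφ : ∀ (g : G) (x : X) (ξ : Ξ), φ (g • x) (g • ξ) = ρ g (φ x ξ))
    (hψ : ∀ (g : G) (x : X) (ξ : Ξ), ψ (g • x) (g • ξ) = ρ g (ψ x ξ))
    -- the composite operator `T = S_φ ∘ R_ψ` is a well-defined bounded linear operator
    (T : Lp Y 2 μX →L[ℂ] Lp Y 2 μX)
    (hT : ∀ f : Lp Y 2 μX,
      ⇑(T f) =ᵐ[μX] fun x =>
        ∫ ξ, (∫ x', (inner ℂ (f x') (ψ x' ξ) : ℂ) ∂μX) • φ x ξ ∂μΞ)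
    -- the unitary representation `π` of `G` on `L²(X;Y)`
    (Pi : G →* (Lp Y 2 μX ≃ₗᵢ[ℂ] Lp Y 2 μX))
    (hPi : ∀ (g : G) (f : Lp Y 2 μX),
      ⇑(Pi g f) =ᵐ[μX] fun x => ρ g (f (g⁻¹ • x)))
    -- irreducibility of `π`
    (hirr : ∀ V : Submodule ℂ (Lp Y 2 μX), IsClosed (V : Set (Lp Y 2 μX)) →
      (∀ (g : G) (f : Lp Y 2 μX), f ∈ V → Pi g f ∈ V) → V = ⊥ ∨ V = ⊤) :
    ∃ C : ℂ, ∀ f : Lp Y 2 μX, T f = C • f := by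
  obtain ⟨C, hC⟩ := exists_eq_smul_of_commute_of_irreducible Pi hirr
    (commute_of_ae_eq_jointMachine_ridgeletTransform ρ hμX hμΞ hφ hψ hT hPi)
  exact ⟨C, hC⟩

/-- **Main reconstruction formula.** Let `G` be a locally compact group,
`X` and `Ξ` `G`-spaces with `G`-invariant measures, `Y` a separable Hilbert space with a
unitary representation `ρ : G → U(Y)`, and `φ, ψ : X × Ξ → Y` joint-`G`-equivariant
feature maps.  Assume the composite `T = S_φ ∘ R_ψ` of the joint-equivariant machine
`S_φ[γ](x) = ∫_Ξ γ(ξ) • φ(x,ξ) dξ` with the ridgelet transform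
`R_ψ[f](ξ) = ∫_X ⟨f(x), ψ(x,ξ)⟩ dx` is a well-defined bounded linear operator on
`L²(X;Y)`, and that the unitary representation `π_g[f](x) = ρ_g (f (g⁻¹ • x))` on
`L²(X;Y)` (here `Pi`, given with its action a.e.) is irreducible.  Then there is a
constant `C ∈ ℂ` with `S_φ[R_ψ[f]] = C • f` for every `f ∈ L²(X;Y)`. -/
theorem statement6
    {G X Ξ Y : Type*} [Group G] [TopologicalSpace G] [IsTopologicalGroup G]
    [LocallyCompactSpace G]
    [MeasurableSpace X] [MulAction G X]
    [MeasurableSpace Ξ] [MulAction G Ξ]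
    (μX : Measure X) (μΞ : Measure Ξ)
    (hμX : ∀ g : G, MeasurePreserving (fun x : X => g • x) μX μX)
    (hμΞ : ∀ g : G, MeasurePreserving (fun ξ : Ξ => g • ξ) μΞ μΞ)
    [NormedAddCommGroup Y] [InnerProductSpace ℂ Y] [CompleteSpace Y]
    [TopologicalSpace.SeparableSpace Y]
    (ρ : G →* (Y ≃ₗᵢ[ℂ] Y))
    (φ ψ : X → Ξ → Y)
    (hφ : ∀ (g : G) (x : X) (ξ : Ξ), φ (g • x) (g • ξ) = ρ g (φ x ξ))
    (hψ : ∀ (g : G) (x : X) (ξ : Ξ), ψ (g • x) (g • ξ) = ρ g (ψ x ξ))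
    -- the composite operator `T = S_φ ∘ R_ψ` is a well-defined bounded linear operator
    (T : Lp Y 2 μX →L[ℂ] Lp Y 2 μX)
    (hT : ∀ f : Lp Y 2 μX,
      ⇑(T f) =ᵐ[μX] fun x =>
        ∫ ξ, (∫ x', (inner ℂ (f x') (ψ x' ξ) : ℂ) ∂μX) • φ x ξ ∂μΞ)
    -- the unitary representation `π` of `G` on `L²(X;Y)`
    (Pi : G →* (Lp Y 2 μX ≃ₗᵢ[ℂ] Lp Y 2 μX))
    (hPi : ∀ (g : G) (f : Lp Y 2 μX),
      ⇑(Pi g f) =ᵐ[μX] fun x => ρ g (f (g⁻¹ • x)))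
    -- irreducibility of `π`
    (hirr : ∀ V : Submodule ℂ (Lp Y 2 μX), IsClosed (V : Set (Lp Y 2 μX)) →
      (∀ (g : G) (f : Lp Y 2 μX), f ∈ V → Pi g f ∈ V) → V = ⊥ ∨ V = ⊤) :
    ∃ C : ℂ, ∀ f : Lp Y 2 μX, T f = C • f :=
  statement6_general μX μΞ hμX hμΞ ρ φ ψ hφ hψ T hT Pi hPi hirr
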